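/- Let k be a field with char k ≠ 2, let (G,D) be a 3-transposition group with D finite, let M = M_{1/2}(k,(G,D)), and let d be a derivation of M. Let ψ: Φ⁺(D₄) → D be a D₄-subspace of (G,D), let χ,χ' ∈ Φ⁺(D₄) with ⟨χ,χ'⟩ ≠ 0, set a = ψ(χ), b = ψ(χ'), and let c₁, c₂, c₃ be the images under ψ of the three positive roots orthogonal to χ. Then d(a)_b = d(c₁)_{a^b} + d(c₂)_{a^b} + d(c₃)_{a^b}. -/

import Mathlib

noncomputable section
attribute [local instance] Classical.propDecidable

namespace Paper
/-! ### Basics on 3-transposition groups -/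

/-- Conjugation `a^b = b⁻¹ a b`. -/
def conjBy {G : Type*} [Group G] (a b : G) : G := b⁻¹ * a * b

/-- `(G, D)` is a 3-transposition group: `D` is a generating conjugacy class of
involutions such that the product of any two of its elements has order at most 3. -/
structure Is3TG (G : Type*) [Group G] (D : Set G) : Prop where
  nonempty : D.Nonempty
  conj_mem : ∀ a ∈ D, ∀ g : G, conjBy a g ∈ D
  is_conj : ∀ a ∈ D, ∀ b ∈ D, IsConj a b
  order_two : ∀ a ∈ D, orderOf a = 2
  gen : Subgroup.closure D = ⊤
  order_mul_le : ∀ a ∈ D, ∀ b ∈ D, orderOf (a * b) ≤ 3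

/-- A subset `S` is closed under the (abstract) conjugation map `τ`. -/
def SelfConj {X : Type*} (τ : X → X → X) (S : Set X) : Prop := ∀ a ∈ S, ∀ b ∈ S, τ a b ∈ S

/-- The conjugation map restricted to a self-conjugation-closed subset. -/
def setConj {X : Type*} {τ : X → X → X} {S : Set X} (h : SelfConj τ S) (a b : ↥S) : ↥S :=
  ⟨τ a.1 b.1, h a.1 a.2 b.1 b.2⟩

lemma Is3TG.selfConj {G : Type*} [Group G] {D : Set G} (hD : Is3TG G D) :
    SelfConj conjBy D := fun a ha b _ => hD.conj_mem a ha b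

lemma Is3TG.selfConj_inter {G : Type*} [Group G] {D : Set G} (hD : Is3TG G D) (H : Subgroup G) :
    SelfConj conjBy ((H : Set G) ∩ D) := by
  rintro a ⟨haH, haD⟩ b ⟨hbH, hbD⟩
  exact ⟨H.mul_mem (H.mul_mem (H.inv_mem hbH) haH) hbH, hD.conj_mem a haD b⟩
/-! ### Matsuo algebras and derivations -/

/-- The basis vector of the Matsuo algebra corresponding to a transposition. -/
def bvec (k : Type*) [Field k] {X : Type*} (a : X) : X → k := Pi.single a 1

/-- Product of two basis elements of the Matsuo algebra of an abstract conjugation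
structure `τ` on `X` (two distinct elements commute iff `τ a b = a`). -/
def matsuoBasis (k : Type*) [Field k] {X : Type*} (η : k) (τ : X → X → X) (a b : X) :
    X → k :=
  if a = b then Pi.single a 1
  else if τ a b = a then 0
  else (η / 2) • (Pi.single a 1 + Pi.single b 1 - Pi.single (τ a b) 1)

/-- The multiplication of the Matsuo algebra with parameter `η` of an abstract
conjugation structure `τ` on a finite set `X`. -/
def matsuoMul (k : Type*) [Field k] {X : Type*} [Fintype X] (η : k) (τ : X → X → X)
    (f g : X → k) : X → k :=
  ∑ a : X, ∑ b : X, (f a * g b) • matsuoBasis k η τ a b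

/-- Product of two basis elements of the Matsuo algebra `M_η(k, (G, D))`. -/
def matsuoBasisD (k : Type*) [Field k] {G : Type*} [Group G] {D : Set G}
    (h : SelfConj conjBy D) (η : k) (a b : ↥D) : ↥D → k :=
  if a = b then Pi.single a 1
  else if orderOf (a.1 * b.1) = 3 then
    (η / 2) • (Pi.single a 1 + Pi.single b 1 - Pi.single (setConj h a b) 1)
  else 0

/-- The multiplication of the Matsuo algebra `M_η(k, (G, D))` on the vector space `↥D → k`
with basis `D`. -/
def matsuoMulD (k : Type*) [Field k] {G : Type*} [Group G] {D : Set G} [Fintype ↥D]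
    (h : SelfConj conjBy D) (η : k) (f g : ↥D → k) : ↥D → k :=
  ∑ a : ↥D, ∑ b : ↥D, (f a * g b) • matsuoBasisD k h η a b

/-- A linear map `d` is a derivation of the (non-associative) algebra with
multiplication `mul`. -/
def IsDerivation (k : Type*) [Field k] {V : Type*} [AddCommGroup V] [Module k V]
    (mul : V → V → V) (d : V →ₗ[k] V) : Prop :=
  ∀ f g : V, d (mul f g) = mul (d f) g + mul f (d g)
/-! ### Irreducible simply laced root systems and the 3-transposition structure of `3ⁿ:W` -/

/-- An irreducible simply laced root system of rank `n`, realized on its root lattice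
`Λ = ℤⁿ` (identified with `ℤΦ` via a base), together with a choice of positive system.
`B` is the (symmetric, positive definite) bilinear form, all roots have norm `2`, the set
of roots is finite, closed under negation and reflections, has Cartan integers in
`{0, ±1}` for non-proportional roots, spans the lattice, and is irreducible. -/
structure SLRootSystem (n : ℕ) where
  B : (Fin n → ℤ) →ₗ[ℤ] (Fin n → ℤ) →ₗ[ℤ] ℤ
  symm : ∀ v w, B v w = B w v
  posdef : ∀ v : Fin n → ℤ, v ≠ 0 → 0 < B v v
  Φ : Finset (Fin n → ℤ)
  root_norm : ∀ α ∈ Φ, B α α = 2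
  neg_mem : ∀ α ∈ Φ, -α ∈ Φ
  reflect_mem : ∀ β ∈ Φ, ∀ α ∈ Φ, α - B β α • β ∈ Φ
  cartan : ∀ α ∈ Φ, ∀ β ∈ Φ, α ≠ β → α ≠ -β → B α β = 0 ∨ B α β = 1 ∨ B α β = -1
  span_top : Submodule.span ℤ (Φ : Set (Fin n → ℤ)) = ⊤
  irred : ∀ S : Finset (Fin n → ℤ), S ⊆ Φ →
    (∀ α ∈ S, ∀ β ∈ Φ, β ∉ S → B α β = 0) → S = ∅ ∨ S = Φ
  pos : Finset (Fin n → ℤ)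
  pos_subset : pos ⊆ Φ
  pos_iff : ∀ α ∈ Φ, (α ∈ pos ↔ -α ∉ pos)
  pos_add : ∀ α ∈ pos, ∀ β ∈ pos, α + β ∈ Φ → α + β ∈ pos

namespace SLRootSystem

variable {n : ℕ}

lemma neg_reflect_mem_pos (RS : SLRootSystem n) {β α : Fin n → ℤ} (hβ : β ∈ RS.pos)
    (hα : α ∈ RS.pos) (h : α - RS.B β α • β ∉ RS.pos) : -(α - RS.B β α • β) ∈ RS.pos := by
  have hΦ : α - RS.B β α • β ∈ RS.Φ :=
    RS.reflect_mem β (RS.pos_subset hβ) α (RS.pos_subset hα)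
  by_contra h'
  exact h ((RS.pos_iff _ hΦ).mpr h')

lemma sub_mem_pos (RS : SLRootSystem n) {a b : Fin n → ℤ} (ha : a ∈ RS.pos)
    (hb : b ∈ RS.pos) (hne : a ≠ b) (hB : RS.B a b ≠ 0) (h1 : a + b ∉ RS.pos)
    (h2 : a - b ∉ RS.pos) : b - a ∈ RS.pos := by
  have haΦ := RS.pos_subset ha
  have hbΦ := RS.pos_subset hb
  have hneg : a ≠ -b := by
    intro h
    rw [h] at ha
    exact (RS.pos_iff b hbΦ).mp hb ha
  rcases RS.cartan a haΦ b hbΦ hne hneg with h0 | hone | hmone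
  · exact absurd h0 hB
  · have hsym : RS.B b a = 1 := by rw [RS.symm]; exact hone
    have hmem : a - RS.B b a • b ∈ RS.Φ := RS.reflect_mem b hbΦ a haΦ
    rw [hsym, one_smul] at hmem
    by_contra h'
    rw [← neg_sub] at h'
    exact h2 ((RS.pos_iff _ hmem).mpr h')
  · have hsym : RS.B b a = -1 := by rw [RS.symm]; exact hmone
    have hmem : a - RS.B b a • b ∈ RS.Φ := RS.reflect_mem b hbΦ a haΦ
    rw [hsym] at hmem
    have hmem' : a + b ∈ RS.Φ := by
      have : a - (-1 : ℤ) • b = a + b := by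
        rw [neg_smul, one_smul, sub_neg_eq_add]
      rwa [this] at hmem
    exact absurd (RS.pos_add a ha b hb hmem') h1

end SLRootSystem

/-- The transposition class of the 3-transposition group `3ⁿ:W`: the element
`(a, ε)` represents the transposition `(ε ᾱ, σ_α)` for `α` the positive root `a`. -/
def D0 {n : ℕ} (RS : SLRootSystem n) : Type := ↥RS.pos × ZMod 3

instance {n : ℕ} (RS : SLRootSystem n) : Fintype (D0 RS) :=
  inferInstanceAs (Fintype (↥RS.pos × ZMod 3))

/-- Conjugation in the transposition class of `3ⁿ:W`:
`(ε₁ᾱ, σ_α)^{(ε₂β̄, σ_β)} = ((ε₁ - ε₂⟨β,α⟩) σ_β(α)‾, σ_{σ_β(α)})`, rewritten in terms of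
the positive root `±σ_β(α)`. -/
def conj0 {n : ℕ} (RS : SLRootSystem n) : D0 RS → D0 RS → D0 RS := fun a b =>
  if h : (a.1.1 - RS.B b.1.1 a.1.1 • b.1.1) ∈ RS.pos then
    (⟨a.1.1 - RS.B b.1.1 a.1.1 • b.1.1, h⟩, a.2 - ((RS.B b.1.1 a.1.1 : ℤ) : ZMod 3) * b.2)
  else
    (⟨-(a.1.1 - RS.B b.1.1 a.1.1 • b.1.1), RS.neg_reflect_mem_pos b.1.2 a.1.2 h⟩,
      -(a.2 - ((RS.B b.1.1 a.1.1 : ℤ) : ZMod 3) * b.2))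

/-- The vertical lines of the Fischer space of `3ⁿ:W` are the fibres of the first
projection `D₀ → Φ⁺`. -/
def IsVertLine {n : ℕ} (RS : SLRootSystem n) (L : Set (D0 RS)) : Prop :=
  ∃ α : ↥RS.pos, L = {p : D0 RS | p.1 = α}
/-! ### The positive system of type `D₄` and distinguished subspaces of Fischer spaces -/

/-- The positive roots of type `D₄`: `eᵢ - eⱼ` and `eᵢ + eⱼ` for `i < j`. -/
def D4Pos : Set (Fin 4 → ℤ) :=
  {v | ∃ i j : Fin 4, i < j ∧
    (v = Pi.single i 1 - Pi.single j 1 ∨ v = Pi.single i 1 + Pi.single j 1)}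

/-- The standard inner product on `ℤ⁴`. -/
def ip4 (v w : Fin 4 → ℤ) : ℤ := ∑ i, v i * w i

/-- The reflection `σ_χ(χ') = χ' - ⟨χ, χ'⟩ χ` (for `χ` of norm 2). -/
def refl4 (χ χ' : Fin 4 → ℤ) : Fin 4 → ℤ := χ' - ip4 χ χ' • χ

/-- `ψ` is a `D₄`-subspace of the 3-transposition group `(G, D)`. -/
def IsD4Subspace {G : Type*} [Group G] (D : Set G) (ψ : ↥D4Pos → ↥D) : Prop :=
  Function.Injective ψ ∧
  (∀ χ χ' : ↥D4Pos, χ ≠ χ' → (Commute (ψ χ : G) (ψ χ' : G) ↔ ip4 χ.1 χ'.1 = 0)) ∧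
  (∀ χ χ' : ↥D4Pos, ip4 χ.1 χ'.1 ≠ 0 → ∀ χ'' : ↥D4Pos,
    (χ''.1 = refl4 χ'.1 χ.1 ∨ χ''.1 = -refl4 χ'.1 χ.1) →
      conjBy (ψ χ : G) (ψ χ' : G) = (ψ χ'' : G))

/-- `ψ` is a `3³:2`-subspace of the 3-transposition group `(G, D)`. -/
def Is3cube2Subspace {G : Type*} [Group G] (D : Set G) (ψ : (Fin 3 → ZMod 3) → ↥D) : Prop :=
  Function.Injective ψ ∧
  ∀ x y : Fin 3 → ZMod 3, (ψ (-x - y) : G) = conjBy (ψ x : G) (ψ y : G)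

/-- `ψ` is a `3³:S₄`-subspace of the 3-transposition group `(G, D)`; here the
transposition class of `3³:S₄` is modelled as `D0 RS` for `RS` an irreducible simply
laced root system of rank 3 (necessarily of type `A₃`). -/
def Is33S4Subspace {G : Type*} [Group G] (D : Set G) (RS : SLRootSystem 3)
    (ψ : D0 RS → ↥D) : Prop :=
  Function.Injective ψ ∧
  ∀ x y : D0 RS, (ψ (conj0 RS x y) : G) = conjBy (ψ x : G) (ψ y : G)

/-! ### Auxiliary group lemmas -/

section GroupAux

variable {G : Type*} [Group G] {D : Set G}

lemma orderOf_conjBy (x g : G) : orderOf (conjBy x g) = orderOf x := by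
  have h1 : conjBy x g = (MulAut.conj g⁻¹) x := by
    simp only [conjBy, MulAut.conj_apply, inv_inv]
  rw [h1]
  exact orderOf_injective (MulAut.conj g⁻¹).toMonoidHom (MulAut.conj g⁻¹).injective x

lemma orderOf_mul_swap (a b : G) : orderOf (b * a) = orderOf (a * b) := by
  have h1 : b * a = conjBy (a * b) a := by simp only [conjBy]; group
  rw [h1, orderOf_conjBy]

variable (hD : Is3TG G D)
include hD

lemma Is3TG.sq (a : ↥D) : a.1 * a.1 = 1 := by
  have h := pow_orderOf_eq_one a.1
  rw [hD.order_two a.1 a.2, pow_two] at h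
  exact h

lemma Is3TG.inv_eq (a : ↥D) : a.1⁻¹ = a.1 :=
  inv_eq_of_mul_eq_one_right (hD.sq a)

/-- If two transpositions commute, the order of their product is not 3. -/
lemma Is3TG.comm_not3 {a b : ↥D} (hc : Commute a.1 b.1) :
    orderOf (a.1 * b.1) ≠ 3 := by
  intro h3
  have h2 : (a.1 * b.1) ^ 2 = 1 := by
    calc (a.1 * b.1) ^ 2 = (a.1 * b.1) * (a.1 * b.1) := pow_two _
    _ = a.1 * (b.1 * a.1) * b.1 := by group
    _ = a.1 * (a.1 * b.1) * b.1 := by rw [← hc.eq]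
    _ = (a.1 * a.1) * (b.1 * b.1) := by group
    _ = 1 := by rw [hD.sq a, hD.sq b, one_mul]
  have hdvd := orderOf_dvd_of_pow_eq_one h2
  rw [h3] at hdvd
  omega

/-- Products of transpositions have finite order. -/
lemma Is3TG.finOrder [Fintype ↥D] (a b : ↥D) : orderOf (a.1 * b.1) ≠ 0 := by
  set x := a.1 * b.1 with hx
  have key : ∀ c : ↥D, ∃ t : ℕ, 0 < t ∧ Commute c.1 (x ^ t) := by
    intro c
    have hF : ∀ n : ℕ, (x ^ n)⁻¹ * c.1 * (x ^ n) ∈ D := fun n =>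
      hD.conj_mem c.1 c.2 (x ^ n)
    obtain ⟨m', n', hne, hmn⟩ :=
      Finite.exists_ne_map_eq_of_infinite (fun n : ℕ => (⟨_, hF n⟩ : ↥D))
    simp only [Subtype.mk.injEq] at hmn
    have main : ∀ m n : ℕ, m < n →
        (x ^ m)⁻¹ * c.1 * (x ^ m) = (x ^ n)⁻¹ * c.1 * (x ^ n) →
        ∃ t : ℕ, 0 < t ∧ Commute c.1 (x ^ t) := by
      intro m n hlt heq
      refine ⟨n - m, by omega, ?_⟩
      have hn : x ^ n = x ^ m * x ^ (n - m) := by rw [← pow_add]; congr 1; omega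
      have heq2 : (x ^ m)⁻¹ * c.1 * x ^ m
          = (x ^ (n-m))⁻¹ * ((x ^ m)⁻¹ * c.1 * x ^ m) * x ^ (n-m) := by
        conv_lhs => rw [heq]
        rw [hn]; group
      have h3 : Commute ((x ^ m)⁻¹ * c.1 * x ^ m) (x ^ (n-m)) := by
        rw [Commute, SemiconjBy]
        conv_rhs => rw [heq2]
        group
      have h4 := h3.map (MulAut.conj (x ^ m)).toMonoidHom
      simp only [MulEquiv.coe_toMonoidHom, MulAut.conj_apply] at h4
      have e1 : x ^ m * ((x ^ m)⁻¹ * c.1 * x ^ m) * (x ^ m)⁻¹ = c.1 := by group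
      have e2 : x ^ m * x ^ (n-m) * (x ^ m)⁻¹ = x ^ (n-m) := by group
      rwa [e1, e2] at h4
    rcases hne.lt_or_gt with h | h
    · exact main m' n' h hmn
    · exact main n' m' h hmn.symm
  obtain ⟨s, hs, hcs⟩ := key a
  obtain ⟨t, ht, hct⟩ := key b
  have hca : Commute a.1 (x ^ (s * t)) := by
    rw [pow_mul]; exact hcs.pow_right t
  have hcb : Commute b.1 (x ^ (s * t)) := by
    rw [mul_comm, pow_mul]; exact hct.pow_right s
  set N := s * t with hN
  have hNpos : 0 < N := Nat.mul_pos hs ht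
  have hconj : b.1⁻¹ * x * b.1 = x⁻¹ := by
    rw [hx, mul_inv_rev, hD.inv_eq a, hD.inv_eq b]
    calc b.1 * (a.1 * b.1) * b.1 = b.1 * a.1 * (b.1 * b.1) := by group
    _ = b.1 * a.1 := by rw [hD.sq b, mul_one]
  have hXN : x ^ N = (x ^ N)⁻¹ := by
    have hmp := map_pow (MulAut.conj b.1⁻¹).toMonoidHom x N
    simp only [MulEquiv.coe_toMonoidHom, MulAut.conj_apply, inv_inv] at hmp
    calc x ^ N = b.1⁻¹ * x ^ N * b.1 := by
          rw [mul_assoc, ← hcb.eq]; group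
    _ = (b.1⁻¹ * x * b.1) ^ N := by rw [← hmp]
    _ = (x⁻¹) ^ N := by rw [hconj]
    _ = (x ^ N)⁻¹ := by rw [inv_pow]
  have h1 : x ^ (N + N) = 1 := by
    rw [pow_add]
    nth_rewrite 2 [hXN]
    simp
  have hdvd := orderOf_dvd_of_pow_eq_one h1
  intro h0
  rw [h0, Nat.zero_dvd] at hdvd
  omega

/-- If two transpositions do not commute, the order of their product is 3. -/
lemma Is3TG.notcomm3 [Fintype ↥D] {a b : ↥D} (hc : ¬ Commute a.1 b.1) :
    orderOf (a.1 * b.1) = 3 := by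
  have h0 := hD.finOrder a b
  have h3 := hD.order_mul_le a.1 a.2 b.1 b.2
  have h1 : orderOf (a.1 * b.1) ≠ 1 := by
    intro h
    rw [orderOf_eq_one_iff] at h
    have hb : b.1 = a.1 := by
      have h' := congrArg (fun z => a.1 * z) h
      simpa [← mul_assoc, hD.sq a] using h'
    exact hc (by rw [hb])
  have h2 : orderOf (a.1 * b.1) ≠ 2 := by
    intro h
    have hp := pow_orderOf_eq_one (a.1 * b.1)
    rw [h, pow_two] at hp
    apply hc
    have e1 : a.1 * b.1 = (a.1 * b.1)⁻¹ := eq_inv_of_mul_eq_one_right hp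
    rw [mul_inv_rev, hD.inv_eq a, hD.inv_eq b] at e1
    exact e1
  omega

end GroupAux
/-! ### setConj lemmas -/

section ConjAux

variable {G : Type*} [Group G] {D : Set G} (hD : Is3TG G D)

lemma setConj_coe (a b : ↥D) :
    (setConj hD.selfConj a b).1 = b.1⁻¹ * a.1 * b.1 := rfl

include hD

lemma Is3TG.o3_ne {a b : ↥D} (h3 : orderOf (a.1 * b.1) = 3) : a ≠ b := by
  intro h
  subst h
  rw [hD.sq a, orderOf_one] at h3
  omega

omit hD in
lemma o3_swap {a b : ↥D} (h3 : orderOf (a.1 * b.1) = 3) :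
    orderOf (b.1 * a.1) = 3 := by rw [orderOf_mul_swap]; exact h3

lemma Is3TG.setConj_order (a b : ↥D) :
    orderOf ((setConj hD.selfConj a b).1 * b.1) = orderOf (a.1 * b.1) := by
  have h1 : (setConj hD.selfConj a b).1 * b.1 = conjBy (a.1 * b.1) b.1 := by
    rw [setConj_coe hD]; simp only [conjBy]; group
  rw [h1, orderOf_conjBy]

lemma Is3TG.setConj_setConj (a b : ↥D) :
    setConj hD.selfConj (setConj hD.selfConj a b) b = a := by
  apply Subtype.ext
  rw [setConj_coe hD, setConj_coe hD, hD.inv_eq b]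
  calc b.1 * (b.1 * a.1 * b.1) * b.1 = (b.1 * b.1) * a.1 * (b.1 * b.1) := by group
  _ = a.1 := by rw [hD.sq b]; group

lemma Is3TG.setConj_ne_self {a b : ↥D} (h3 : orderOf (a.1 * b.1) = 3) :
    setConj hD.selfConj a b ≠ a := by
  intro h
  have h1 : b.1 * a.1 * b.1 = a.1 := by
    have h0 := congrArg Subtype.val h
    rwa [setConj_coe hD, hD.inv_eq b] at h0
  have hc : Commute a.1 b.1 := by
    calc a.1 * b.1 = (b.1 * a.1 * b.1) * b.1 := by rw [h1]
    _ = b.1 * a.1 * (b.1 * b.1) := by group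
    _ = b.1 * a.1 := by rw [hD.sq b, mul_one]
  exact hD.comm_not3 hc h3

lemma Is3TG.setConj_ne_right {a b : ↥D} (h3 : orderOf (a.1 * b.1) = 3) :
    setConj hD.selfConj a b ≠ b := by
  intro h
  apply hD.o3_ne h3
  have h1 : b.1 * a.1 * b.1 = b.1 := by
    have h0 := congrArg Subtype.val h
    rwa [setConj_coe hD, hD.inv_eq b] at h0
  apply Subtype.ext
  calc a.1 = (b.1 * b.1) * a.1 * (b.1 * b.1) := by rw [hD.sq b]; group
  _ = b.1 * (b.1 * a.1 * b.1) * b.1 := by group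
  _ = b.1 * b.1 * b.1 := by rw [h1]
  _ = b.1 := by rw [hD.sq b, one_mul]

lemma Is3TG.setConj_comm {a b : ↥D} (h3 : orderOf (a.1 * b.1) = 3) :
    setConj hD.selfConj a b = setConj hD.selfConj b a := by
  have hp : (a.1 * b.1) ^ 3 = 1 := by rw [← h3]; exact pow_orderOf_eq_one _
  have e2 : (a.1 * b.1)⁻¹ = (a.1 * b.1) ^ 2 :=
    inv_eq_of_mul_eq_one_right (by rw [← pow_succ']; exact hp)
  have h1 : b.1 * a.1 = a.1 * b.1 * (a.1 * b.1) := by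
    rw [← pow_two, ← e2, mul_inv_rev, hD.inv_eq a, hD.inv_eq b]
  apply Subtype.ext
  rw [setConj_coe hD, setConj_coe hD, hD.inv_eq a, hD.inv_eq b]
  calc b.1 * a.1 * b.1 = (b.1 * a.1) * b.1 := rfl
  _ = (a.1 * b.1 * (a.1 * b.1)) * b.1 := by rw [h1]
  _ = a.1 * b.1 * a.1 * (b.1 * b.1) := by group
  _ = a.1 * b.1 * a.1 := by rw [hD.sq b, mul_one]

end ConjAux

/-! ### Coefficient lemmas for the Matsuo multiplication -/

section Coeff

variable {k : Type*} [Field k]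

lemma sval_ne {X : Type*} [DecidableEq X] {a y : X} (h : y ≠ a) :
    Pi.single (M := fun _ => k) a 1 y = (0:k) := Pi.single_eq_of_ne h 1

lemma sval_eq {X : Type*} [DecidableEq X] (a : X) :
    Pi.single (M := fun _ => k) a 1 a = (1:k) := Pi.single_eq_same a 1

lemma bval_ne {X : Type*} {a y : X} (h : y ≠ a) : bvec k a y = 0 :=
  Pi.single_eq_of_ne h 1

lemma bval_eq {X : Type*} (a : X) : bvec k a a = 1 :=
  Pi.single_eq_same a 1

variable {G : Type*} [Group G] {D : Set G} [Fintype ↥D]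
  (hD : Is3TG G D) (η : k)

lemma matsuoMulD_apply (f g : ↥D → k) (y : ↥D) :
    matsuoMulD k hD.selfConj η f g y
      = ∑ a : ↥D, ∑ b : ↥D, (f a * g b) * matsuoBasisD k hD.selfConj η a b y := by
  simp [matsuoMulD, Finset.sum_apply, smul_eq_mul]

lemma mul_bvec_apply (f : ↥D → k) (b y : ↥D) :
    matsuoMulD k hD.selfConj η f (bvec k b) y
      = ∑ a : ↥D, f a * matsuoBasisD k hD.selfConj η a b y := by
  rw [matsuoMulD_apply hD η]
  apply Finset.sum_congr rfl
  intro a _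
  have hz : ∀ c ∈ Finset.univ, c ≠ b →
      (f a * bvec k b c) * matsuoBasisD k hD.selfConj η a c y = 0 := by
    intro c _ hcb
    have h0 : bvec k b c = 0 := bval_ne hcb
    rw [h0, mul_zero, zero_mul]
  rw [Finset.sum_eq_single_of_mem b (Finset.mem_univ b) hz]
  have h1 : bvec k b b = 1 := bval_eq b
  rw [h1, mul_one]

lemma bvec_mul_apply (f : ↥D → k) (a y : ↥D) :
    matsuoMulD k hD.selfConj η (bvec k a) f y
      = ∑ b : ↥D, f b * matsuoBasisD k hD.selfConj η a b y := by
  rw [matsuoMulD_apply hD η, Finset.sum_comm]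
  apply Finset.sum_congr rfl
  intro b _
  have hz : ∀ c ∈ Finset.univ, c ≠ a →
      (bvec k a c * f b) * matsuoBasisD k hD.selfConj η c b y = 0 := by
    intro c _ hca
    have h0 : bvec k a c = 0 := bval_ne hca
    rw [h0, zero_mul, zero_mul]
  rw [Finset.sum_eq_single_of_mem a (Finset.mem_univ a) hz]
  have h1 : bvec k a a = 1 := bval_eq a
  rw [h1, one_mul, mul_comm]

include hD

omit [Fintype ↥D] in
lemma basisD_comm (a b : ↥D) :
    matsuoBasisD k hD.selfConj η a b = matsuoBasisD k hD.selfConj η b a := by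
  by_cases hab : a = b
  · subst hab; rfl
  · by_cases h3 : orderOf (a.1 * b.1) = 3
    · rw [matsuoBasisD, matsuoBasisD, if_neg hab, if_neg (Ne.symm hab),
        if_pos h3, if_pos (o3_swap h3), hD.setConj_comm h3]
      congr 1
      abel
    · rw [matsuoBasisD, matsuoBasisD, if_neg hab, if_neg (Ne.symm hab),
        if_neg h3, if_neg (fun hs => h3 (o3_swap hs))]

/-- coefficient of `y` in `f * b`, collinear case -/
lemma sumC1 (f : ↥D → k) {b y : ↥D} (h3 : orderOf (y.1 * b.1) = 3) :
    ∑ a : ↥D, f a * matsuoBasisD k hD.selfConj η a b y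
      = η / 2 * (f y - f (setConj hD.selfConj y b)) := by
  set y' := setConj hD.selfConj y b with hy'
  have h3' : orderOf (y'.1 * b.1) = 3 := by
    rw [hy', hD.setConj_order y b]; exact h3
  have hyy' : y ≠ y' := fun h => hD.setConj_ne_self h3 h.symm
  have hyb : y ≠ b := hD.o3_ne h3
  have hy'b : y' ≠ b := hD.o3_ne h3'
  have hcc : setConj hD.selfConj y' b = y := hD.setConj_setConj y b
  have hvanish : ∀ x ∈ Finset.univ, x ∉ ({y, y'} : Finset ↥D) →
      f x * matsuoBasisD k hD.selfConj η x b y = 0 := by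
    intro x _ hx
    simp only [Finset.mem_insert, Finset.mem_singleton, not_or] at hx
    obtain ⟨hxy, hxy'⟩ := hx
    by_cases hxb : x = b
    · subst hxb
      rw [matsuoBasisD, if_pos rfl, sval_ne hyb, mul_zero]
    · by_cases hx3 : orderOf (x.1 * b.1) = 3
      · rw [matsuoBasisD, if_neg hxb, if_pos hx3]
        have e3 : y ≠ setConj hD.selfConj x b := by
          intro h
          apply Ne.symm hxy'
          rw [hy', h, hD.setConj_setConj]
        simp only [Pi.smul_apply, Pi.sub_apply, Pi.add_apply, smul_eq_mul,
          sval_ne (Ne.symm hxy), sval_ne hyb, sval_ne e3]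
        ring
      · rw [matsuoBasisD, if_neg hxb, if_neg hx3]
        simp
  rw [← Finset.sum_subset (Finset.subset_univ {y, y'}) hvanish]
  rw [Finset.sum_pair hyy']
  have hMy : matsuoBasisD k hD.selfConj η y b y = η / 2 := by
    rw [matsuoBasisD, if_neg hyb, if_pos h3]
    have e3 : y ≠ setConj hD.selfConj y b := Ne.symm (hD.setConj_ne_self h3)
    simp only [Pi.smul_apply, Pi.sub_apply, Pi.add_apply, smul_eq_mul,
      sval_eq y, sval_ne hyb, sval_ne e3]
    ring
  have hMy' : matsuoBasisD k hD.selfConj η y' b y = - (η / 2) := by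
    rw [matsuoBasisD, if_neg hy'b, if_pos h3']
    have e3 : Pi.single (M := fun _ => k) (setConj hD.selfConj y' b) 1 y = 1 := by
      rw [hcc]; exact sval_eq y
    simp only [Pi.smul_apply, Pi.sub_apply, Pi.add_apply, smul_eq_mul,
      sval_ne hyy', sval_ne hyb, e3]
    ring
  rw [hMy, hMy']
  ring

/-- coefficient of `y` in `f * b`, distant case -/
lemma sumC2 (f : ↥D → k) {b y : ↥D} (hyb : y ≠ b)
    (hn3 : orderOf (y.1 * b.1) ≠ 3) :
    ∑ a : ↥D, f a * matsuoBasisD k hD.selfConj η a b y = 0 := by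
  apply Finset.sum_eq_zero
  intro x _
  by_cases hxb : x = b
  · subst hxb
    rw [matsuoBasisD, if_pos rfl, sval_ne hyb, mul_zero]
  · by_cases hx3 : orderOf (x.1 * b.1) = 3
    · rw [matsuoBasisD, if_neg hxb, if_pos hx3]
      have e1 : y ≠ x := by
        intro h; exact hn3 (h ▸ hx3)
      have e3 : y ≠ setConj hD.selfConj x b := by
        intro h
        apply hn3
        rw [h, hD.setConj_order x b]; exact hx3
      simp only [Pi.smul_apply, Pi.sub_apply, Pi.add_apply, smul_eq_mul,
        sval_ne e1, sval_ne hyb, sval_ne e3]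
      ring
    · rw [matsuoBasisD, if_neg hxb, if_neg hx3]
      simp

/-- coefficient of `b` in `f * b` -/
lemma sumC3 (f : ↥D → k) (b : ↥D) :
    ∑ a : ↥D, f a * matsuoBasisD k hD.selfConj η a b b
      = f b + η / 2 *
        ∑ x ∈ Finset.univ.filter (fun x : ↥D => orderOf (x.1 * b.1) = 3), f x := by
  rw [← Finset.add_sum_erase _ _ (Finset.mem_univ b)]
  have hb : f b * matsuoBasisD k hD.selfConj η b b b = f b := by
    rw [matsuoBasisD, if_pos rfl, sval_eq b, mul_one]
  rw [hb]
  congr 1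
  have hsub : Finset.univ.filter (fun x : ↥D => orderOf (x.1 * b.1) = 3)
      ⊆ Finset.univ.erase b := by
    intro x hx
    rw [Finset.mem_filter] at hx
    exact Finset.mem_erase.2 ⟨hD.o3_ne hx.2, Finset.mem_univ x⟩
  rw [← Finset.sum_subset hsub]
  · rw [Finset.mul_sum]
    apply Finset.sum_congr rfl
    intro x hx
    rw [Finset.mem_filter] at hx
    have hx3 := hx.2
    have hxb : x ≠ b := hD.o3_ne hx3
    rw [matsuoBasisD, if_neg hxb, if_pos hx3]
    have e3 : b ≠ setConj hD.selfConj x b := Ne.symm (hD.setConj_ne_right hx3)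
    simp only [Pi.smul_apply, Pi.sub_apply, Pi.add_apply, smul_eq_mul,
      sval_ne hxb.symm, sval_eq b, sval_ne e3]
    ring
  · intro x hx hnx
    rw [Finset.mem_erase] at hx
    rw [Finset.mem_filter] at hnx
    push_neg at hnx
    have hn3 := hnx (Finset.mem_univ x)
    rw [matsuoBasisD, if_neg hx.1, if_neg hn3]
    simp

/-- row versions -/
lemma sumR1 (f : ↥D → k) {a y : ↥D} (h3 : orderOf (y.1 * a.1) = 3) :
    ∑ b : ↥D, f b * matsuoBasisD k hD.selfConj η a b y
      = η / 2 * (f y - f (setConj hD.selfConj y a)) := by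
  have hc : ∀ b ∈ Finset.univ, f b * matsuoBasisD k hD.selfConj η a b y
      = f b * matsuoBasisD k hD.selfConj η b a y := by
    intro b _; rw [basisD_comm hD]
  rw [Finset.sum_congr rfl hc]
  exact sumC1 hD η f h3

lemma sumR2 (f : ↥D → k) {a y : ↥D} (hya : y ≠ a)
    (hn3 : orderOf (y.1 * a.1) ≠ 3) :
    ∑ b : ↥D, f b * matsuoBasisD k hD.selfConj η a b y = 0 := by
  have hc : ∀ b ∈ Finset.univ, f b * matsuoBasisD k hD.selfConj η a b y
      = f b * matsuoBasisD k hD.selfConj η b a y := by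
    intro b _; rw [basisD_comm hD]
  rw [Finset.sum_congr rfl hc]
  exact sumC2 hD η f hya hn3

lemma sumR3 (f : ↥D → k) (a : ↥D) :
    ∑ b : ↥D, f b * matsuoBasisD k hD.selfConj η a b a
      = f a + η / 2 *
        ∑ x ∈ Finset.univ.filter (fun x : ↥D => orderOf (x.1 * a.1) = 3), f x := by
  have hc : ∀ b ∈ Finset.univ, f b * matsuoBasisD k hD.selfConj η a b a
      = f b * matsuoBasisD k hD.selfConj η b a a := by
    intro b _; rw [basisD_comm hD]
  rw [Finset.sum_congr rfl hc]
  exact sumC3 hD η f a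

lemma mm_bvec (a b : ↥D) :
    matsuoMulD k hD.selfConj η (bvec k a) (bvec k b)
      = matsuoBasisD k hD.selfConj η a b := by
  funext y
  rw [bvec_mul_apply hD η]
  have hz : ∀ c ∈ Finset.univ, c ≠ b →
      bvec k b c * matsuoBasisD k hD.selfConj η a c y = 0 := by
    intro c _ hcb
    rw [bval_ne hcb, zero_mul]
  rw [Finset.sum_eq_single_of_mem b (Finset.mem_univ b) hz, bval_eq b, one_mul]

end Coeff
/-! ### Derivation identities -/

section DerivEq

variable {k : Type*} [Field k] (hk2 : (2 : k) ≠ 0)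
  {G : Type*} [Group G] {D : Set G} [Fintype ↥D] (hD : Is3TG G D)
  (d : (↥D → k) →ₗ[k] (↥D → k))
  (hd : IsDerivation k (matsuoMulD k hD.selfConj ((1 : k) / 2)) d)

include hk2

lemma four_ne : ((2:k) * 2) ≠ 0 := mul_ne_zero hk2 hk2

lemma clear4 (x : k) : (2:k) * 2 * (((1:k)/2)/2 * x) = x := by
  have h1 : ((1:k)/2)/2 = ((2:k)*2)⁻¹ := by rw [div_div, one_div]
  rw [h1, ← mul_assoc, mul_inv_cancel₀ (four_ne hk2), one_mul]

omit hk2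

include hD hd

lemma basisD_diag (a : ↥D) :
    matsuoBasisD k hD.selfConj ((1:k)/2) a a = bvec k a := by
  rw [matsuoBasisD, if_pos rfl]
  funext y
  by_cases hy : y = a
  · subst hy; rw [sval_eq y, bval_eq y]
  · rw [sval_ne hy, bval_ne hy]

omit hD hd

include hk2 hD hd

/-- F2 : antisymmetry of coefficients along lines through `a`. -/
lemma derF2 {a y : ↥D} (h3 : orderOf (y.1 * a.1) = 3) :
    d (bvec k a) y = - d (bvec k a) (setConj hD.selfConj y a) := by
  have H := congrFun (hd (bvec k a) (bvec k a)) y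
  rw [mm_bvec hD ((1:k)/2) a a, basisD_diag hD d hd a] at H
  rw [Pi.add_apply, mul_bvec_apply hD ((1:k)/2), bvec_mul_apply hD ((1:k)/2),
    sumC1 hD ((1:k)/2) _ h3, sumR1 hD ((1:k)/2) _ h3] at H
  have H4 := congrArg (fun z => (2:k) * 2 * z) H
  simp only [mul_add, clear4 hk2] at H4
  refine mul_left_cancel₀ hk2 ?_
  linear_combination H4

/-- F1 : vanishing of coefficients away from lines through `a`. -/
lemma derF1 {a y : ↥D} (hya : y ≠ a) (hn3 : orderOf (y.1 * a.1) ≠ 3) :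
    d (bvec k a) y = 0 := by
  have H := congrFun (hd (bvec k a) (bvec k a)) y
  rw [mm_bvec hD ((1:k)/2) a a, basisD_diag hD d hd a] at H
  rw [Pi.add_apply, mul_bvec_apply hD ((1:k)/2), bvec_mul_apply hD ((1:k)/2),
    sumC2 hD ((1:k)/2) _ hya hn3, sumR2 hD ((1:k)/2) _ hya hn3] at H
  simpa using H

/-- F1a : vanishing of the diagonal coefficient. -/
lemma derF1a (a : ↥D) : d (bvec k a) a = 0 := by
  have H := congrFun (hd (bvec k a) (bvec k a)) a
  rw [mm_bvec hD ((1:k)/2) a a, basisD_diag hD d hd a] at H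
  rw [Pi.add_apply, mul_bvec_apply hD ((1:k)/2), bvec_mul_apply hD ((1:k)/2),
    sumC3 hD ((1:k)/2), sumR3 hD ((1:k)/2)] at H
  have hS : ∑ x ∈ Finset.univ.filter (fun x : ↥D => orderOf (x.1 * a.1) = 3),
      d (bvec k a) x = 0 := by
    apply Finset.sum_involution (fun x _ => setConj hD.selfConj x a)
    · intro x hx
      rw [Finset.mem_filter] at hx
      rw [derF2 hk2 hD d hd hx.2]
      ring
    · intro x hx _
      rw [Finset.mem_filter] at hx
      exact hD.setConj_ne_self hx.2
    · intro x hx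
      rw [Finset.mem_filter] at hx ⊢
      exact ⟨Finset.mem_univ _, by rw [hD.setConj_order x a]; exact hx.2⟩
    · intro x hx
      exact hD.setConj_setConj x a
  rw [hS, mul_zero, add_zero] at H
  linear_combination -H

/-- E2 : the relation coming from a commuting pair. -/
lemma derE2 {a b y : ↥D} (hab : a ≠ b) (hn3 : orderOf (a.1 * b.1) ≠ 3)
    (h3b : orderOf (y.1 * b.1) = 3) (h3a : orderOf (y.1 * a.1) = 3) :
    d (bvec k a) y - d (bvec k a) (setConj hD.selfConj y b)
      + d (bvec k b) y - d (bvec k b) (setConj hD.selfConj y a) = 0 := by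
  have H := congrFun (hd (bvec k a) (bvec k b)) y
  have hz : matsuoBasisD k hD.selfConj ((1:k)/2) a b = 0 := by
    rw [matsuoBasisD, if_neg hab, if_neg hn3]
  rw [mm_bvec hD ((1:k)/2) a b, hz, map_zero] at H
  rw [Pi.add_apply, mul_bvec_apply hD ((1:k)/2), bvec_mul_apply hD ((1:k)/2),
    sumC1 hD ((1:k)/2) _ h3b, sumR1 hD ((1:k)/2) _ h3a] at H
  have H0 : (0:k) = ((1:k)/2)/2 * (d (bvec k a) y
        - d (bvec k a) (setConj hD.selfConj y b))
      + ((1:k)/2)/2 * (d (bvec k b) y - d (bvec k b) (setConj hD.selfConj y a)) := by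
    simpa using H
  have H4 := congrArg (fun z => (2:k) * 2 * z) H0
  simp only [mul_add, clear4 hk2, mul_zero] at H4
  linear_combination -H4
end DerivEq
/-! ### The core computation for a `D₄` configuration -/

section AbsCore

variable {k : Type*} [Field k] (hk2 : (2 : k) ≠ 0)
  {G : Type*} [Group G] {D : Set G} [Fintype ↥D] (hD : Is3TG G D)
  (d : (↥D → k) →ₗ[k] (↥D → k))
  (hd : IsDerivation k (matsuoMulD k hD.selfConj ((1 : k) / 2)) d)

include hk2 hD hd

lemma abs_core (A B C : ZMod 2 × ZMod 2 → ↥D)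
    (hAne : ∀ u u' : ZMod 2 × ZMod 2, u ≠ u' → A u ≠ A u')
    (hAn3 : ∀ u u' : ZMod 2 × ZMod 2, u ≠ u' → orderOf ((A u).1 * (A u').1) ≠ 3)
    (hBA3 : ∀ v u : ZMod 2 × ZMod 2, orderOf ((B v).1 * (A u).1) = 3)
    (hCA3 : ∀ w u : ZMod 2 × ZMod 2, orderOf ((C w).1 * (A u).1) = 3)
    (cBA : ∀ v u : ZMod 2 × ZMod 2, setConj hD.selfConj (B v) (A u) = C (u + v))
    (cCA : ∀ w u : ZMod 2 × ZMod 2, setConj hD.selfConj (C w) (A u) = B (u + w))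
    (u₀ v₀ : ZMod 2 × ZMod 2) :
    d (bvec k (A u₀)) (B v₀)
      = d (bvec k (A (u₀ + (0,1)))) (C (u₀ + v₀))
      + d (bvec k (A (u₀ + (1,0)))) (C (u₀ + v₀))
      + d (bvec k (A (u₀ + (1,1)))) (C (u₀ + v₀)) := by
  have hxx : ∀ x : ZMod 2 × ZMod 2, x + x = 0 := by decide
  have hCB : ∀ u w : ZMod 2 × ZMod 2,
      d (bvec k (A u)) (C w) = - d (bvec k (A u)) (B (u + w)) := by
    intro u w
    rw [derF2 hk2 hD d hd (hCA3 w u), cCA w u]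
  have hpair : ∀ s : ZMod 2 × ZMod 2, s ≠ 0 → ∀ t u : ZMod 2 × ZMod 2,
      (d (bvec k (A u)) (B (u + t)) + d (bvec k (A u)) (B (u + (t + s))))
      + (d (bvec k (A (u + s))) (B ((u + s) + t))
          + d (bvec k (A (u + s))) (B ((u + s) + (t + s)))) = 0 := by
    intro s hs t u
    have hus : u ≠ u + s := by
      intro h
      exact hs (by rwa [eq_comm, add_eq_left] at h)
    have hE := derE2 hk2 hD d hd (hAne u (u + s) hus) (hAn3 u (u + s) hus)
      (hBA3 (u + t) (u + s)) (hBA3 (u + t) u)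
    rw [cBA (u + t) (u + s), cBA (u + t) u] at hE
    rw [hCB u ((u + s) + (u + t)), hCB (u + s) (u + (u + t))] at hE
    have e1 : u + ((u + s) + (u + t)) = u + (t + s) := by linear_combination hxx u
    have e2 : (u + s) + (u + (u + t)) = (u + s) + t := by linear_combination hxx u
    have e3 : (u + s) + (t + s) = u + t := by linear_combination hxx s
    rw [e1, e2] at hE
    rw [e3]
    linear_combination hE
  have hS : ∀ t : ZMod 2 × ZMod 2,
      (∑ u : ZMod 2 × ZMod 2, d (bvec k (A u)) (B (u + t))) = 0 := by
    have hSkey : ∀ s : ZMod 2 × ZMod 2, s ≠ 0 → ∀ t : ZMod 2 × ZMod 2,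
        (∑ u : ZMod 2 × ZMod 2, d (bvec k (A u)) (B (u + t)))
        + (∑ u : ZMod 2 × ZMod 2, d (bvec k (A u)) (B (u + (t + s)))) = 0 := by
      intro s hs t
      rw [← Finset.sum_add_distrib]
      apply Finset.sum_involution (fun u _ => u + s)
      · intro u _
        have h1 := hpair s hs t u
        linear_combination h1
      · intro u _ _
        intro h
        exact hs (by rwa [add_eq_left] at h)
      · intro u _
        exact Finset.mem_univ _
      · intro u _
        rw [add_assoc, hxx s, add_zero]
    intro t
    have h1 := hSkey ((0:ZMod 2),(1:ZMod 2)) (by decide) t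
    have h2 := hSkey ((1:ZMod 2),(0:ZMod 2)) (by decide) (t + ((0:ZMod 2),(1:ZMod 2)))
    have h3 := hSkey ((1:ZMod 2),(1:ZMod 2)) (by decide)
      (t + ((0:ZMod 2),(1:ZMod 2)) + ((1:ZMod 2),(0:ZMod 2)))
    have e4 : t + ((0:ZMod 2),(1:ZMod 2)) + ((1:ZMod 2),(0:ZMod 2)) + ((1:ZMod 2),(1:ZMod 2)) = t := by
      have h0 : ((0:ZMod 2),(1:ZMod 2)) + ((1:ZMod 2),(0:ZMod 2)) + ((1:ZMod 2),(1:ZMod 2))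
          = (0 : ZMod 2 × ZMod 2) := by decide
      linear_combination h0
    rw [e4] at h3
    refine mul_left_cancel₀ hk2 ?_
    linear_combination h1 - h2 + h3
  have hexp : ∀ F : ZMod 2 × ZMod 2 → k, (∑ u : ZMod 2 × ZMod 2, F u)
      = F (u₀ + ((0:ZMod 2),(0:ZMod 2))) + F (u₀ + ((0:ZMod 2),(1:ZMod 2)))
      + F (u₀ + ((1:ZMod 2),(0:ZMod 2))) + F (u₀ + ((1:ZMod 2),(1:ZMod 2))) := by
    intro F
    rw [← Fintype.sum_equiv (Equiv.addLeft u₀) (fun u => F (u₀ + u)) F (fun u => rfl)]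
    rw [show (Finset.univ : Finset (ZMod 2 × ZMod 2))
      = {((0:ZMod 2),(0:ZMod 2)), ((0:ZMod 2),(1:ZMod 2)),
         ((1:ZMod 2),(0:ZMod 2)), ((1:ZMod 2),(1:ZMod 2))} from by decide]
    rw [Finset.sum_insert (by decide), Finset.sum_insert (by decide),
      Finset.sum_insert (by decide), Finset.sum_singleton]
    ring
  have hfin3 :
      d (bvec k (A (u₀ + ((0:ZMod 2),(0:ZMod 2))))) (B ((u₀ + ((0:ZMod 2),(0:ZMod 2))) + (u₀ + v₀)))
      + d (bvec k (A (u₀ + ((0:ZMod 2),(1:ZMod 2))))) (B ((u₀ + ((0:ZMod 2),(1:ZMod 2))) + (u₀ + v₀)))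
      + d (bvec k (A (u₀ + ((1:ZMod 2),(0:ZMod 2))))) (B ((u₀ + ((1:ZMod 2),(0:ZMod 2))) + (u₀ + v₀)))
      + d (bvec k (A (u₀ + ((1:ZMod 2),(1:ZMod 2))))) (B ((u₀ + ((1:ZMod 2),(1:ZMod 2))) + (u₀ + v₀)))
      = 0 :=
    (hexp (fun u => d (bvec k (A u)) (B (u + (u₀ + v₀))))).symm.trans (hS (u₀ + v₀))
  have g0 : u₀ + ((0:ZMod 2),(0:ZMod 2)) = u₀ := by
    have : ((0:ZMod 2),(0:ZMod 2)) = (0 : ZMod 2 × ZMod 2) := rfl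
    rw [this, add_zero]
  have garg : u₀ + (u₀ + v₀) = v₀ := by linear_combination hxx u₀
  rw [g0, garg] at hfin3
  rw [hCB (u₀ + ((0:ZMod 2),(1:ZMod 2))) (u₀ + v₀),
    hCB (u₀ + ((1:ZMod 2),(0:ZMod 2))) (u₀ + v₀),
    hCB (u₀ + ((1:ZMod 2),(1:ZMod 2))) (u₀ + v₀)]
  linear_combination hfin3

end AbsCore
/-! ### The labelled root system of type `D₄` -/

section Roots

/-- Table of the positive roots of `D₄`, arranged in three quadruples of four. -/
def rootTbl : Fin 3 → Fin 2 → Fin 2 → (Fin 4 → ℤ) :=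
  ![![![![1,-1,0,0], ![1,1,0,0]], ![![0,0,1,-1], ![0,0,1,1]]],
    ![![![1,0,-1,0], ![1,0,1,0]], ![![0,1,0,-1], ![0,1,0,1]]],
    ![![![0,1,-1,0], ![0,1,1,0]], ![![1,0,0,-1], ![1,0,0,1]]]]

/-- The positive root of `D₄` with quadruple index `i` and Klein-four label `u`. -/
def rootL (i : Fin 3) (u : ZMod 2 × ZMod 2) : Fin 4 → ℤ := rootTbl i u.1 u.2

lemma RFmem_aux : ∀ (i : Fin 3) (u : ZMod 2 × ZMod 2), ∃ a b : Fin 4, a < b ∧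
    (rootL i u = Pi.single a 1 - Pi.single b 1 ∨
     rootL i u = Pi.single a 1 + Pi.single b 1) := by decide

lemma RFmem (i : Fin 3) (u : ZMod 2 × ZMod 2) : rootL i u ∈ D4Pos := RFmem_aux i u

lemma RFenum_aux : ∀ i j : Fin 4, i < j →
    ((∃ a b, (Pi.single i (1:ℤ) - Pi.single j 1) = rootL a b) ∧
     (∃ a b, (Pi.single i (1:ℤ) + Pi.single j 1) = rootL a b)) := by decide

lemma root_enum (v : ↥D4Pos) : ∃ i u, v.1 = rootL i u := by
  obtain ⟨a, b, hab, hv⟩ := v.2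
  rcases hv with hv | hv
  · obtain ⟨i, u, h⟩ := (RFenum_aux a b hab).1
    exact ⟨i, u, hv.trans h⟩
  · obtain ⟨i, u, h⟩ := (RFenum_aux a b hab).2
    exact ⟨i, u, hv.trans h⟩

lemma RFdist : ∀ (i : Fin 3) (u u' : ZMod 2 × ZMod 2), u ≠ u' →
    rootL i u ≠ rootL i u' := by decide

lemma RFinj : ∀ (i j : Fin 3) (u v : ZMod 2 × ZMod 2), rootL i u = rootL j v → i = j := by decide

lemma RForth : ∀ (i : Fin 3) (u u' : ZMod 2 × ZMod 2), u ≠ u' →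
    ip4 (rootL i u) (rootL i u') = 0 := by decide

lemma RFnon : ∀ (i j : Fin 3) (u v : ZMod 2 × ZMod 2), i ≠ j →
    ip4 (rootL i u) (rootL j v) ≠ 0 := by decide

lemma RFself : ∀ (i : Fin 3) (u : ZMod 2 × ZMod 2), ip4 (rootL i u) (rootL i u) ≠ 0 := by
  decide

lemma RFzero : ∀ (i j : Fin 3) (u v : ZMod 2 × ZMod 2),
    ip4 (rootL i u) (rootL j v) = 0 → i = j ∧ u ≠ v := by decide

lemma RFconj : ∀ (i j : Fin 3) (u v : ZMod 2 × ZMod 2), i ≠ j →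
    (rootL (-(i+j)) (u+v) = refl4 (rootL i u) (rootL j v) ∨
     rootL (-(i+j)) (u+v) = -(refl4 (rootL i u) (rootL j v))) := by decide

lemma tf1 : ∀ i j : Fin 3, i ≠ j →
    (-(i+j) ≠ i ∧ -(i+j) ≠ j ∧ -(i + -(i+j)) = j ∧ -(j+i) = -(i+j)) := by decide

lemma mem3 : ∀ u₀ w : ZMod 2 × ZMod 2, w ≠ u₀ →
    (w = u₀+(0,1) ∨ w = u₀+(1,0) ∨ w = u₀+(1,1)) := by decide

lemma selfip (v : ↥D4Pos) : ip4 v.1 v.1 ≠ 0 := by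
  obtain ⟨i, u, h⟩ := root_enum v
  rw [h]; exact RFself i u

end Roots

/-- If the line through `a = ψ(χ)` and `b = ψ(χ')` lies in a
`D₄`-subspace and `c₁, c₂, c₃` are the images of the three positive roots orthogonal
to `χ`, then `d(a)_b = d(c₁)_{a^b} + d(c₂)_{a^b} + d(c₃)_{a^b}`. -/
theorem statement2 (k : Type*) [Field k] (hk2 : (2 : k) ≠ 0)
    {G : Type*} [Group G] {D : Set G} [Fintype ↥D] (hD : Is3TG G D)
    (d : (↥D → k) →ₗ[k] (↥D → k))
    (hd : IsDerivation k (matsuoMulD k hD.selfConj ((1 : k) / 2)) d)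
    (ψ : ↥D4Pos → ↥D) (hψ : IsD4Subspace D ψ)
    (χ χ' : ↥D4Pos) (hχχ' : ip4 χ.1 χ'.1 ≠ 0)
    (c₁ c₂ c₃ : ↥D4Pos) (h12 : c₁ ≠ c₂) (h13 : c₁ ≠ c₃) (h23 : c₂ ≠ c₃)
    (hc₁ : ip4 χ.1 c₁.1 = 0) (hc₂ : ip4 χ.1 c₂.1 = 0) (hc₃ : ip4 χ.1 c₃.1 = 0) :
    d (bvec k (ψ χ)) (ψ χ') =
      d (bvec k (ψ c₁)) (setConj hD.selfConj (ψ χ) (ψ χ'))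
      + d (bvec k (ψ c₂)) (setConj hD.selfConj (ψ χ) (ψ χ'))
      + d (bvec k (ψ c₃)) (setConj hD.selfConj (ψ χ) (ψ χ')) := by
  obtain ⟨hinj, hcomm_iff, hconj⟩ := hψ
  -- a root orthogonal to χ is distinct from χ, and its image commutes with that of χ
  have hperp : ∀ c : ↥D4Pos, ip4 χ.1 c.1 = 0 →
      ψ χ ≠ ψ c ∧ orderOf ((ψ χ).1 * (ψ c).1) ≠ 3 := by
    intro c hc
    have hne : χ ≠ c := by
      intro h
      rw [← h] at hc
      exact selfip χ hc
    have hne' : ψ χ ≠ ψ c := fun h => hne (hinj h)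
    exact ⟨hne', hD.comm_not3 ((hcomm_iff χ c hne).mpr hc)⟩
  by_cases hxx : χ = χ'
  · -- degenerate case
    subst hxx
    have hsc : setConj hD.selfConj (ψ χ) (ψ χ) = ψ χ := by
      apply Subtype.ext
      rw [setConj_coe hD]
      group
    rw [hsc]
    rw [derF1a hk2 hD d hd (ψ χ),
      derF1 hk2 hD d hd (hperp c₁ hc₁).1 (hperp c₁ hc₁).2,
      derF1 hk2 hD d hd (hperp c₂ hc₂).1 (hperp c₂ hc₂).2,
      derF1 hk2 hD d hd (hperp c₃ hc₃).1 (hperp c₃ hc₃).2]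
    ring
  · -- main case
    obtain ⟨i₀, u₀, hχ⟩ := root_enum χ
    obtain ⟨j₀, v₀, hχ'⟩ := root_enum χ'
    have hij : i₀ ≠ j₀ := by
      intro h
      subst h
      have huv : u₀ ≠ v₀ := by
        intro h2
        exact hxx (Subtype.ext (by rw [hχ, hχ', h2]))
      exact hχχ' (by rw [hχ, hχ']; exact RForth i₀ u₀ v₀ huv)
    obtain ⟨hki, hkj, hik_third, hji⟩ := tf1 i₀ j₀ hij
    set k₀ : Fin 3 := -(i₀ + j₀) with hk₀
    set A : ZMod 2 × ZMod 2 → ↥D := fun u => ψ ⟨rootL i₀ u, RFmem i₀ u⟩ with hA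
    set B : ZMod 2 × ZMod 2 → ↥D := fun v => ψ ⟨rootL j₀ v, RFmem j₀ v⟩ with hB
    set C : ZMod 2 × ZMod 2 → ↥D := fun w => ψ ⟨rootL k₀ w, RFmem k₀ w⟩ with hC
    have hψχ : ψ χ = A u₀ := congrArg ψ (Subtype.ext hχ)
    have hψχ' : ψ χ' = B v₀ := congrArg ψ (Subtype.ext hχ')
    -- abs_core hypotheses
    have hAne : ∀ u u' : ZMod 2 × ZMod 2, u ≠ u' → A u ≠ A u' := by
      intro u u' h hEq
      exact RFdist i₀ u u' h (congrArg Subtype.val (hinj hEq))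
    have hAn3 : ∀ u u' : ZMod 2 × ZMod 2, u ≠ u' →
        orderOf ((A u).1 * (A u').1) ≠ 3 := by
      intro u u' h
      apply hD.comm_not3
      refine (hcomm_iff _ _ ?_).mpr (RForth i₀ u u' h)
      intro hEq
      exact RFdist i₀ u u' h (congrArg Subtype.val hEq)
    have hord3 : ∀ (i j : Fin 3) (_ : i ≠ j) (u v : ZMod 2 × ZMod 2),
        orderOf ((ψ ⟨rootL i u, RFmem i u⟩).1 * (ψ ⟨rootL j v, RFmem j v⟩).1) = 3 := by
      intro i j hij' u v
      apply hD.notcomm3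
      intro hc
      have hne : (⟨rootL i u, RFmem i u⟩ : ↥D4Pos) ≠ ⟨rootL j v, RFmem j v⟩ := by
        intro hEq
        exact hij' (RFinj i j u v (congrArg Subtype.val hEq))
      exact RFnon i j u v hij' ((hcomm_iff _ _ hne).mp hc)
    have hBA3 : ∀ v u : ZMod 2 × ZMod 2, orderOf ((B v).1 * (A u).1) = 3 :=
      fun v u => hord3 j₀ i₀ (Ne.symm hij) v u
    have hCA3 : ∀ w u : ZMod 2 × ZMod 2, orderOf ((C w).1 * (A u).1) = 3 :=
      fun w u => hord3 k₀ i₀ hki w u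
    -- conjugation rules
    have hconj' : ∀ (i j : Fin 3) (_ : i ≠ j) (l : Fin 3) (_ : -(i+j) = l)
        (u v : ZMod 2 × ZMod 2),
        setConj hD.selfConj (ψ ⟨rootL j v, RFmem j v⟩) (ψ ⟨rootL i u, RFmem i u⟩)
          = ψ ⟨rootL l (u+v), RFmem l (u+v)⟩ := by
      intro i j hij' l hl u v
      apply Subtype.ext
      have hrc := RFconj i j u v hij'
      rw [hl] at hrc
      exact hconj ⟨rootL j v, RFmem j v⟩ ⟨rootL i u, RFmem i u⟩
        (RFnon j i v u (Ne.symm hij')) ⟨rootL l (u+v), RFmem l (u+v)⟩ hrc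
    have cBA : ∀ v u : ZMod 2 × ZMod 2,
        setConj hD.selfConj (B v) (A u) = C (u + v) :=
      fun v u => hconj' i₀ j₀ hij k₀ rfl u v
    have cCA : ∀ w u : ZMod 2 × ZMod 2,
        setConj hD.selfConj (C w) (A u) = B (u + w) :=
      fun w u => hconj' i₀ k₀ (Ne.symm hki) j₀ hik_third u w
    have hsc : setConj hD.selfConj (ψ χ) (ψ χ') = C (u₀ + v₀) := by
      rw [hψχ, hψχ']
      have h1 : (-(j₀ + i₀) : Fin 3) = k₀ := hji
      have h2 := hconj' j₀ i₀ (Ne.symm hij) k₀ h1 v₀ u₀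
      rw [add_comm v₀ u₀] at h2
      exact h2
    -- labels of the cᵢ
    have hclabel : ∀ c : ↥D4Pos, ip4 χ.1 c.1 = 0 → ∃ u, u ≠ u₀ ∧ ψ c = A u := by
      intro c hc
      obtain ⟨ic, uc, hcL⟩ := root_enum c
      have h0 : ip4 (rootL i₀ u₀) (rootL ic uc) = 0 := by rw [← hχ, ← hcL]; exact hc
      obtain ⟨hieq, hune⟩ := RFzero i₀ ic u₀ uc h0
      subst hieq
      exact ⟨uc, Ne.symm hune, congrArg ψ (Subtype.ext hcL)⟩
    obtain ⟨w1, hw1ne, hc1A⟩ := hclabel c₁ hc₁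
    obtain ⟨w2, hw2ne, hc2A⟩ := hclabel c₂ hc₂
    obtain ⟨w3, hw3ne, hc3A⟩ := hclabel c₃ hc₃
    have hw12 : w1 ≠ w2 := fun h => h12 (hinj (by rw [hc1A, hc2A, h]))
    have hw13 : w1 ≠ w3 := fun h => h13 (hinj (by rw [hc1A, hc3A, h]))
    have hw23 : w2 ≠ w3 := fun h => h23 (hinj (by rw [hc2A, hc3A, h]))
    have hmain := abs_core hk2 hD d hd A B C hAne hAn3 hBA3 hCA3 cBA cCA u₀ v₀
    rw [hsc, hψχ, hψχ', hc1A, hc2A, hc3A, hmain]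
    rcases mem3 u₀ w1 hw1ne with h1 | h1 | h1 <;>
      rcases mem3 u₀ w2 hw2ne with h2 | h2 | h2 <;>
        rcases mem3 u₀ w3 hw3ne with h3 | h3 | h3 <;>
          subst h1 <;> subst h2 <;> subst h3 <;>
            first
              | exact absurd rfl hw12
              | exact absurd rfl hw13
              | exact absurd rfl hw23
              | ring
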